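/- arXiv:2512.03323 — 4 statements merged into one kernel-verified Lean document; each statement's English description precedes it below -/
import Mathlib

section
/- Let n ≥ 1 and let Z ⊆ ℂⁿ be a closed set with Hausdorff dimension at most 2n − 2. If (φ_j) is a sequence of upper semicontinuous, locally bounded functions ℂⁿ → ℝ, each satisfying the circle sub-mean value inequality, and if for every compact C ⊆ ℂⁿ \ Z one has sup_j sup_C φ_j < ∞, then for every compact C' ⊆ ℂⁿ one has sup_j sup_{C'} φ_j < ∞. -/
/-!
For every `z` there is a direction `w` such that the whole circle `z + S¹ • w` misses `Z`:
the map `q w = (‖w₀‖², w̄₀ w₁, …, w̄₀ wₘ)` from `ℂᵐ⁺¹` to `ℝ × ℂᵐ` is smooth, constant on the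
circles `S¹ • w`, and hits every point with positive first coordinate. Since
`dimH Z ≤ 2m < 2m + 1 = dim (ℝ × ℂᵐ)`, the Hausdorff-dimension form of Sard's theorem makes the
complement of `q (Z - z)` dense, so some `q w` with `‖w₀‖ > 0` avoids it. A compact neighbourhood
of that circle lies in `ℂⁿ \ Z`, where all `φ j` are bounded by one constant `M`, and the
sub-mean value inequality on the translated circles bounds every `φ j` by `M` near `z`.
Compactness finishes the proof.
-/

open MeasureTheory
open scoped ENNReal

/-- A function `φ : ℂⁿ → ℝ` satisfies the circle sub-mean value inequality if for all
`z, w ∈ ℂⁿ` one has `φ(z) ≤ (1/2π) ∫₀^{2π} φ(z + e^{iθ} w) dθ`. -/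
def CircleSubMean {n : ℕ} (φ : EuclideanSpace ℂ (Fin n) → ℝ) : Prop :=
  ∀ z w : EuclideanSpace ℂ (Fin n),
    φ z ≤ (1 / (2 * Real.pi)) *
      ∫ θ in (0 : ℝ)..(2 * Real.pi), φ (z + Complex.exp (θ * Complex.I) • w)

/-- A function is locally bounded if near every point it is bounded above and below. -/
def LocBounded {n : ℕ} (φ : EuclideanSpace ℂ (Fin n) → ℝ) : Prop :=
  ∀ x : EuclideanSpace ℂ (Fin n), ∃ s ∈ nhds x, BddAbove (φ '' s) ∧ BddBelow (φ '' s)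

open Set Metric Topology Module

theorem IsCompact.exists_forall_le_of_nhds {X ι α : Type*} [TopologicalSpace X] [Preorder α]
    [IsDirectedOrder α] [Nonempty α] {K : Set X} (hK : IsCompact K) {f : ι → X → α}
    (h : ∀ x ∈ K, ∃ U ∈ 𝓝 x, ∃ M, ∀ j, ∀ y ∈ U, f j y ≤ M) :
    ∃ M, ∀ j, ∀ y ∈ K, f j y ≤ M := by
  refine hK.induction_on ⟨Classical.arbitrary α, by simp⟩
    (fun s t hst ⟨M, hM⟩ => ⟨M, fun j y hy => hM j y (hst hy)⟩)
    (fun s t ⟨M₁, hM₁⟩ ⟨M₂, hM₂⟩ => ?_)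
    (fun x hx => ?_)
  · obtain ⟨M, h₁, h₂⟩ := exists_ge_ge M₁ M₂
    exact ⟨M, fun j y hy => hy.elim (fun hy => (hM₁ j y hy).trans h₁)
      (fun hy => (hM₂ j y hy).trans h₂)⟩
  · obtain ⟨U, hU, hM⟩ := h x hx
    exact ⟨U, mem_nhdsWithin_of_mem_nhds hU, hM⟩

variable {n : ℕ}

theorem LocBounded.bddBelow_image {φ : EuclideanSpace ℂ (Fin n) → ℝ} (hφ : LocBounded φ)
    {K : Set (EuclideanSpace ℂ (Fin n))} (hK : IsCompact K) : BddBelow (φ '' K) := by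
  obtain ⟨M, hM⟩ := hK.exists_forall_le_of_nhds (f := fun (_ : Unit) y => -φ y) fun x _ => by
    obtain ⟨U, hU, -, c, hc⟩ := hφ x
    exact ⟨U, hU, -c, fun _ y hy => neg_le_neg (hc (mem_image_of_mem φ hy))⟩
  exact ⟨-M, forall_mem_image.2 fun y hy => neg_le.1 (hM () y hy)⟩

theorem CircleSubMean.le_of_forall_le {φ : EuclideanSpace ℂ (Fin n) → ℝ}
    (hsub : CircleSubMean φ) (husc : UpperSemicontinuous φ) (hloc : LocBounded φ)
    {z w : EuclideanSpace ℂ (Fin n)} {M : ℝ} (hM : ∀ c : ℂ, ‖c‖ = 1 → φ (z + c • w) ≤ M) :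
    φ z ≤ M := by
  borelize (EuclideanSpace ℂ (Fin n))
  set f : ℝ → ℝ := fun θ => φ (z + Complex.exp (θ * Complex.I) • w)
  have hfM : ∀ θ, f θ ≤ M := fun θ => hM _ (Complex.norm_exp_ofReal_mul_I θ)
  obtain ⟨c, hc⟩ : BddBelow (φ '' ((fun c : ℂ => z + c • w) '' sphere 0 1)) :=
    hloc.bddBelow_image ((isCompact_sphere 0 1).image (by fun_prop))
  have hcf : ∀ θ, c ≤ f θ := fun θ => hc ⟨_, ⟨_, by simp, rfl⟩, rfl⟩
  have hf : IntervalIntegrable f volume 0 (2 * Real.pi) := by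
    refine (intervalIntegrable_const (c := max |M| |c|)).mono_fun'
      (husc.measurable.comp (by fun_prop)).aestronglyMeasurable
      (Filter.Eventually.of_forall fun θ => ?_)
    exact abs_le.2 ⟨(neg_le_neg (le_max_right _ _)).trans ((neg_abs_le c).trans (hcf θ)),
      (hfM θ).trans ((le_abs_self M).trans (le_max_left _ _))⟩
  calc φ z ≤ (1 / (2 * Real.pi)) * ∫ θ in (0 : ℝ)..(2 * Real.pi), f θ := hsub z w
    _ ≤ (1 / (2 * Real.pi)) * ∫ _ in (0 : ℝ)..(2 * Real.pi), M := by
      gcongr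
      exact intervalIntegral.integral_mono_on (by positivity) hf intervalIntegrable_const
        fun θ _ => hfM θ
    _ = M := by
      rw [intervalIntegral.integral_const, smul_eq_mul, sub_zero]
      field_simp

theorem exists_nhds_forall_le_of_forall_add_smul_notMem {ι : Type*}
    {Z : Set (EuclideanSpace ℂ (Fin n))} (hZ : IsClosed Z)
    {φ : ι → EuclideanSpace ℂ (Fin n) → ℝ} (husc : ∀ j, UpperSemicontinuous (φ j))
    (hloc : ∀ j, LocBounded (φ j)) (hsub : ∀ j, CircleSubMean (φ j))
    (hbdd : ∀ C : Set (EuclideanSpace ℂ (Fin n)), IsCompact C → C ⊆ Zᶜ →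
      ∃ M : ℝ, ∀ j, ∀ z ∈ C, φ j z ≤ M)
    {z w : EuclideanSpace ℂ (Fin n)} (hw : ∀ c : ℂ, ‖c‖ = 1 → z + c • w ∉ Z) :
    ∃ U ∈ 𝓝 z, ∃ M : ℝ, ∀ j, ∀ y ∈ U, φ j y ≤ M := by
  set S := (fun c : ℂ => z + c • w) '' sphere 0 1
  have hS : IsCompact S := (isCompact_sphere 0 1).image (by fun_prop)
  obtain ⟨δ, hδ, hδZ⟩ := hS.exists_cthickening_subset_open hZ.isOpen_compl
    (forall_mem_image.2 fun c hc => hw c (mem_sphere_zero_iff_norm.1 hc))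
  obtain ⟨M, hM⟩ := hbdd _ hS.cthickening hδZ
  refine ⟨closedBall z δ, closedBall_mem_nhds z hδ, M, fun j y hy => ?_⟩
  refine (hsub j).le_of_forall_le (w := w) (husc j) (hloc j) fun c hc => hM j _ ?_
  refine mem_cthickening_of_dist_le _ (z + c • w) δ S ⟨c, by simpa using hc, rfl⟩ ?_
  simpa using hy

noncomputable def circleOrbitMap (m : ℕ) (w : EuclideanSpace ℂ (Fin (m + 1))) :
    ℝ × (Fin m → ℂ) :=
  (‖w 0‖ ^ 2, fun k => starRingEnd ℂ (w 0) * w k.succ)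

theorem contDiff_circleOrbitMap (m : ℕ) {k : WithTop ℕ∞} : ContDiff ℝ k (circleOrbitMap m) := by
  have hcoord : ∀ i, ContDiff ℝ k fun w : EuclideanSpace ℂ (Fin (m + 1)) => w i := fun i =>
    (EuclideanSpace.proj (𝕜 := ℂ) i).contDiff.restrict_scalars ℝ
  refine (((contDiff_norm_sq ℂ).comp (hcoord 0))).prodMk (contDiff_pi.2 fun k => ?_)
  exact (Complex.conjCLE.contDiff.comp (hcoord 0)).mul (hcoord k.succ)

theorem circleOrbitMap_smul (m : ℕ) {c : ℂ} (hc : ‖c‖ = 1) (w : EuclideanSpace ℂ (Fin (m + 1))) :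
    circleOrbitMap m (c • w) = circleOrbitMap m w := by
  have hc' : starRingEnd ℂ c * c = 1 := by
    rw [mul_comm, Complex.mul_conj, Complex.normSq_eq_norm_sq, hc]; norm_num
  ext k
  · simp [circleOrbitMap, hc]
  · simp only [circleOrbitMap, PiLp.smul_apply, smul_eq_mul, map_mul]
    linear_combination (starRingEnd ℂ (w 0) * w k.succ) * hc'

theorem exists_circleOrbitMap_eq (m : ℕ) {p : ℝ × (Fin m → ℂ)} (hp : 0 < p.1) :
    ∃ w, circleOrbitMap m w = p := by
  set r : ℝ := Real.sqrt p.1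
  have hr : (r : ℂ) ≠ 0 := Complex.ofReal_ne_zero.2 (Real.sqrt_pos.2 hp).ne'
  refine ⟨WithLp.toLp 2 (Fin.cons (r : ℂ) fun k => p.2 k / r), Prod.ext ?_ (funext fun k => ?_)⟩
  · simp [circleOrbitMap, r, hp.le]
  · simp [circleOrbitMap, Complex.conj_ofReal, mul_div_cancel₀ _ hr]

theorem exists_forall_add_smul_notMem {m : ℕ} {Z : Set (EuclideanSpace ℂ (Fin (m + 1)))}
    (hZ : dimH Z < 2 * m + 1) (z : EuclideanSpace ℂ (Fin (m + 1))) :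
    ∃ w : EuclideanSpace ℂ (Fin (m + 1)), ∀ c : ℂ, ‖c‖ = 1 → z + c • w ∉ Z := by
  have hdim : dimH Z < finrank ℝ (ℝ × (Fin m → ℂ)) := by
    simpa [finrank_prod, finrank_pi_fintype, add_comm, mul_comm] using hZ
  have hdense : Dense ((fun x => circleOrbitMap m (x - z)) '' Z)ᶜ :=
    ((contDiff_circleOrbitMap m).comp (contDiff_id.sub contDiff_const)).contDiffOn
      |>.dense_compl_image_of_dimH_lt_finrank convex_univ (subset_univ Z) hdim
  obtain ⟨p, hpZ, hp⟩ := hdense.exists_mem_open (isOpen_lt continuous_const continuous_fst)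
    ⟨(1, 0), show (0 : ℝ) < 1 from one_pos⟩
  obtain ⟨w, rfl⟩ := exists_circleOrbitMap_eq m hp
  refine ⟨w, fun c hc hcZ => hpZ ⟨_, hcZ, ?_⟩⟩
  simp [circleOrbitMap_smul m hc]

/-- Let `n ≥ 1` and `Z ⊆ ℂⁿ` closed with Hausdorff dimension at most
`2n − 2`.  If `(φ_j)` is a sequence of upper semicontinuous, locally bounded functions each
satisfying the circle sub-mean value inequality, which is uniformly bounded above on every
compact subset of `ℂⁿ \ Z`, then it is uniformly bounded above on every compact subset of
`ℂⁿ`. -/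
theorem stmt_3 (n : ℕ) (hn : 1 ≤ n) (Z : Set (EuclideanSpace ℂ (Fin n)))
    (hZclosed : IsClosed Z) (hZ : dimH Z ≤ (2 * n - 2 : ℝ≥0∞))
    (φ : ℕ → EuclideanSpace ℂ (Fin n) → ℝ)
    (husc : ∀ j, UpperSemicontinuous (φ j))
    (hloc : ∀ j, LocBounded (φ j))
    (hsub : ∀ j, CircleSubMean (φ j))
    (hbdd : ∀ C : Set (EuclideanSpace ℂ (Fin n)), IsCompact C → C ⊆ Zᶜ →
      ∃ M : ℝ, ∀ j, ∀ z ∈ C, φ j z ≤ M) :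
    ∀ C' : Set (EuclideanSpace ℂ (Fin n)), IsCompact C' →
      ∃ M : ℝ, ∀ j, ∀ z ∈ C', φ j z ≤ M := by
  obtain ⟨m, rfl⟩ : ∃ m, n = m + 1 := ⟨n - 1, by omega⟩
  have hZ' : dimH Z < 2 * m + 1 := by
    refine hZ.trans_lt ?_
    rw [Nat.cast_add_one, mul_add_one, ENNReal.add_sub_cancel_right ENNReal.ofNat_ne_top]
    exact ENNReal.lt_add_right (by finiteness) one_ne_zero
  intro C' hC'
  refine hC'.exists_forall_le_of_nhds fun z _ => ?_
  obtain ⟨w, hw⟩ := exists_forall_add_smul_notMem hZ' z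
  exact exists_nhds_forall_le_of_forall_add_smul_notMem hZclosed husc hloc hsub hbdd hw
end

section
/- Let V ⊆ ℝ^d be open, K ⊆ V compact, let w₁, …, w_s be real numbers, and let f₁, …, f_s, g₁, …, g_s : ℝ × V → ℝ be smooth functions such that on (0, ∞) × V one has ∂f_i/∂x₁ = w_i f_i, ∂g_i/∂x₁ = w_i g_i, and g_i > 0 for every i. Then the function F := (Σᵢ f_i)/(Σᵢ g_i) is bounded on (0, ∞) × K, and every iterated partial derivative of F (of any order, in any of the variables) is bounded on (0, ∞) × K. -/
open Set
open scoped ContDiff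

lemma natle (i : ℕ) : (i : WithTop ℕ∞) ≤ ∞ := by exact_mod_cast le_top

lemma clm_iteratedFDeriv_norm_le {E F : Type*} [NormedAddCommGroup E] [NormedSpace ℝ E]
    [NormedAddCommGroup F] [NormedSpace ℝ F] (e : E →L[ℝ] F) {i : ℕ} (hi : 1 ≤ i) (x : E) :
    ‖iteratedFDeriv ℝ i (⇑e) x‖ ≤ ‖e‖ := by
  match i, hi with
  | 1, _ =>
    refine ContinuousMultilinearMap.opNorm_le_bound (norm_nonneg e) fun m => ?_
    rw [iteratedFDeriv_one_apply, e.fderiv]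
    simpa using e.le_opNorm (m 0)
  | (n + 2), _ =>
    have hz : iteratedFDeriv ℝ (n + 2) (⇑e) x = 0 := by
      ext m
      rw [iteratedFDeriv_succ_apply_right]
      have h2 : (fun y : E => fderiv ℝ (⇑e) y) = fun _ => e := funext fun y => e.fderiv
      rw [h2, iteratedFDeriv_const_of_ne (Nat.succ_ne_zero n)]
      simp
    rw [hz]
    simp [norm_nonneg e]

lemma exp_iteratedDeriv (c : ℝ) (n : ℕ) :
    iteratedDeriv n (fun t => Real.exp (c * t)) = fun t => c ^ n * Real.exp (c * t) := by
  induction n with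
  | zero => simp
  | succ n ih =>
    rw [iteratedDeriv_succ, ih]
    funext t
    have h : HasDerivAt (fun t => c ^ n * Real.exp (c * t))
        (c ^ (n + 1) * Real.exp (c * t)) t := by
      have := (((hasDerivAt_id t).const_mul c).exp).const_mul (c ^ n)
      simp only [id] at this
      exact this.congr_deriv (by ring)
    exact h.deriv

lemma exp_contDiff (c : ℝ) : ContDiff ℝ ∞ (fun t : ℝ => Real.exp (c * t)) :=
  Real.contDiff_exp.comp (contDiff_const.mul contDiff_id)

lemma exp_deriv_bound (c : ℝ) (hc : c ≤ 0) (i : ℕ) {t : ℝ} (ht : 0 < t) :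
    ‖iteratedFDeriv ℝ i (fun t : ℝ => Real.exp (c * t)) t‖ ≤ |c| ^ i := by
  rw [norm_iteratedFDeriv_eq_norm_iteratedDeriv, exp_iteratedDeriv]
  have h1 : Real.exp (c * t) ≤ 1 := by
    rw [Real.exp_le_one_iff]
    nlinarith
  have h2 : (0:ℝ) ≤ Real.exp (c * t) := (Real.exp_pos _).le
  rw [Real.norm_eq_abs, abs_mul, abs_pow]
  calc |c| ^ i * |Real.exp (c * t)| ≤ |c| ^ i * 1 := by
        gcongr
        rw [abs_of_nonneg h2]; exact h1
    _ = |c| ^ i := mul_one _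

lemma chi_bound {s d : ℕ} (c : Fin s → ℝ) (hc : ∀ j, c j ≤ 0) {i : ℕ} (hi : 1 ≤ i)
    (p : ℝ × (Fin d → ℝ)) (hp : 0 < p.1) :
    ‖iteratedFDeriv ℝ i
        (fun q : ℝ × (Fin d → ℝ) => ((fun j => Real.exp (c j * q.1)), q.2)) p‖
      ≤ 1 + ∑ j, |c j| ^ i := by
  classical
  set e₂ : (ℝ × (Fin d → ℝ)) →L[ℝ] (Fin s → ℝ) × (Fin d → ℝ) :=
    (ContinuousLinearMap.inr ℝ (Fin s → ℝ) (Fin d → ℝ)).comp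
      (ContinuousLinearMap.snd ℝ ℝ (Fin d → ℝ)) with he₂
  set E : Fin s → (ℝ →L[ℝ] (Fin s → ℝ) × (Fin d → ℝ)) := fun j =>
    (ContinuousLinearMap.inl ℝ (Fin s → ℝ) (Fin d → ℝ)).comp
      (ContinuousLinearMap.pi (Pi.single j (ContinuousLinearMap.id ℝ ℝ))) with hE
  have hEapp : ∀ j (x : ℝ), E j x = (Pi.single j x, 0) := by
    intro j x
    simp only [hE, ContinuousLinearMap.comp_apply, ContinuousLinearMap.inl_apply,
      Prod.mk.injEq]
    refine ⟨funext fun k => ?_, trivial⟩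
    rw [ContinuousLinearMap.pi_apply]
    by_cases h : k = j
    · subst h; simp
    · simp [Pi.single_eq_of_ne h]
  have hEnorm : ∀ j, ‖E j‖ ≤ 1 := by
    intro j
    refine ContinuousLinearMap.opNorm_le_bound _ zero_le_one fun x => ?_
    rw [hEapp, one_mul, Prod.norm_def]
    simp only [norm_zero]
    refine max_le ?_ (norm_nonneg x)
    refine (pi_norm_le_iff_of_nonneg (norm_nonneg x)).2 fun k => ?_
    by_cases h : k = j
    · subst h; simp
    · simp [Pi.single_eq_of_ne h]
  have he₂norm : ‖e₂‖ ≤ 1 := by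
    refine ContinuousLinearMap.opNorm_le_bound _ zero_le_one fun q => ?_
    simp only [he₂, ContinuousLinearMap.comp_apply, ContinuousLinearMap.inr_apply,
      ContinuousLinearMap.coe_snd', one_mul, Prod.norm_def, norm_zero]
    exact max_le (le_max_of_le_right (norm_nonneg _)) (le_max_right _ _)
  have hexp1 : ∀ j, ContDiff ℝ ∞ (fun t : ℝ => Real.exp (c j * t)) := fun j => exp_contDiff _
  have hexpq : ∀ j, ContDiff ℝ ∞ (fun q : ℝ × (Fin d → ℝ) => Real.exp (c j * q.1)) :=
    fun j => (hexp1 j).comp contDiff_fst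
  have hterm : ∀ j, ContDiff ℝ ∞ (fun q : ℝ × (Fin d → ℝ) => E j (Real.exp (c j * q.1))) :=
    fun j => (E j).contDiff.comp (hexpq j)
  have hsum : ContDiff ℝ ∞ (fun q : ℝ × (Fin d → ℝ) => ∑ j, E j (Real.exp (c j * q.1))) :=
    ContDiff.sum (fun j _ => hterm j)
  have hchieq : (fun q : ℝ × (Fin d → ℝ) => ((fun j => Real.exp (c j * q.1)), q.2))
      = fun q => e₂ q + ∑ j, E j (Real.exp (c j * q.1)) := by
    funext q
    rw [Prod.ext_iff]
    constructor
    · simp only [Prod.fst_add, Prod.fst_sum]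
      simp only [hEapp]
      rw [show (∑ j, ((Pi.single j (Real.exp (c j * q.1)) : Fin s → ℝ), (0 : Fin d → ℝ)).1)
          = ∑ j, (Pi.single j (Real.exp (c j * q.1)) : Fin s → ℝ) from rfl]
      rw [Finset.univ_sum_single (fun j => Real.exp (c j * q.1))]
      simp [he₂]
    · simp only [Prod.snd_add, Prod.snd_sum]
      simp [he₂, hEapp]
  rw [hchieq]
  have hadd := iteratedFDeriv_add_apply' (i := i)
    (e₂.contDiff.of_le (natle i)).contDiffAt (hsum.of_le (natle i)).contDiffAt (x := p)
  rw [hadd]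
  refine (norm_add_le _ _).trans ?_
  have h1 : ‖iteratedFDeriv ℝ i (⇑e₂) p‖ ≤ 1 :=
    (clm_iteratedFDeriv_norm_le e₂ hi p).trans he₂norm
  have hsumeq : iteratedFDeriv ℝ i (fun q : ℝ × (Fin d → ℝ) => ∑ j, E j (Real.exp (c j * q.1))) p
      = ∑ j, iteratedFDeriv ℝ i (fun q : ℝ × (Fin d → ℝ) => E j (Real.exp (c j * q.1))) p := by
    have := iteratedFDeriv_sum (𝕜 := ℝ) (u := Finset.univ)
      (f := fun j (q : ℝ × (Fin d → ℝ)) => E j (Real.exp (c j * q.1)))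
      (i := i) (fun j _ => (hterm j).of_le (natle i))
    rw [congrFun this p]
    simp
  rw [hsumeq]
  refine add_le_add h1 ((norm_sum_le _ _).trans ?_)
  refine Finset.sum_le_sum fun j _ => ?_
  have hcl : iteratedFDeriv ℝ i (fun q : ℝ × (Fin d → ℝ) => E j (Real.exp (c j * q.1))) p
      = (E j).compContinuousMultilinearMap
          (iteratedFDeriv ℝ i (fun q : ℝ × (Fin d → ℝ) => Real.exp (c j * q.1)) p) :=
    (E j).iteratedFDeriv_comp_left (hexpq j).contDiffAt (natle i)
  rw [hcl]
  refine ((E j).norm_compContinuousMultilinearMap_le _).trans ?_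
  have hcr : iteratedFDeriv ℝ i (fun q : ℝ × (Fin d → ℝ) => Real.exp (c j * q.1)) p
      = (iteratedFDeriv ℝ i (fun t : ℝ => Real.exp (c j * t)) p.1).compContinuousLinearMap
          (fun _ => ContinuousLinearMap.fst ℝ ℝ (Fin d → ℝ)) :=
    (ContinuousLinearMap.fst ℝ ℝ (Fin d → ℝ)).iteratedFDeriv_comp_right (hexp1 j) p (natle i)
  rw [hcr]
  have h3 : ‖(iteratedFDeriv ℝ i (fun t : ℝ => Real.exp (c j * t)) p.1).compContinuousLinearMap
      (fun _ => ContinuousLinearMap.fst ℝ ℝ (Fin d → ℝ))‖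
      ≤ ‖iteratedFDeriv ℝ i (fun t : ℝ => Real.exp (c j * t)) p.1‖ * 1 := by
    refine (ContinuousMultilinearMap.norm_compContinuousLinearMap_le _ _).trans ?_
    refine mul_le_mul_of_nonneg_left ?_ (norm_nonneg _)
    exact Finset.prod_le_one (fun _ _ => norm_nonneg _)
      (fun _ _ => ContinuousLinearMap.norm_fst_le ..)
  have h5 : ‖(iteratedFDeriv ℝ i (fun t : ℝ => Real.exp (c j * t)) p.1).compContinuousLinearMap
      (fun _ => ContinuousLinearMap.fst ℝ ℝ (Fin d → ℝ))‖ ≤ |c j| ^ i :=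
    h3.trans (by rw [mul_one]; exact exp_deriv_bound (c j) (hc j) i hp)
  refine le_trans (mul_le_mul (hEnorm j) h5 (norm_nonneg _) zero_le_one) ?_
  rw [one_mul]


lemma weight_eq {d : ℕ} {V : Set (Fin d → ℝ)} (hV : IsOpen V) {wi : ℝ}
    {fi : ℝ × (Fin d → ℝ) → ℝ}
    (hfi : ContDiffOn ℝ (⊤ : ℕ∞) fi ((univ : Set ℝ) ×ˢ V))
    (hfw : ∀ p ∈ (Ioi (0:ℝ)) ×ˢ V, fderiv ℝ fi p (1, 0) = wi * fi p)
    {t : ℝ} (ht : 0 < t) {y : Fin d → ℝ} (hy : y ∈ V) :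
    fi (t, y) = Real.exp (wi * t) * (Real.exp (-wi) * fi (1, y)) := by
  set φ : ℝ → ℝ := fun u => Real.exp (-wi * u) * fi (u, y) with hφ
  have hopen : IsOpen ((univ : Set ℝ) ×ˢ V) := isOpen_univ.prod hV
  have hder : ∀ u ∈ Ioi (0:ℝ), HasDerivAt φ 0 u := by
    intro u hu
    have hmem : (u, y) ∈ (univ : Set ℝ) ×ˢ V := ⟨trivial, hy⟩
    have hdiff : DifferentiableAt ℝ fi (u, y) :=
      ((hfi.contDiffAt (hopen.mem_nhds hmem)).differentiableAt (by simp))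
    have hcurve : HasDerivAt (fun u : ℝ => (u, y)) ((1 : ℝ), (0 : Fin d → ℝ)) u :=
      (hasDerivAt_id u).prodMk (hasDerivAt_const u y)
    have hfd : HasDerivAt (fun u : ℝ => fi (u, y)) (wi * fi (u, y)) u := by
      have := hdiff.hasFDerivAt.comp_hasDerivAt u hcurve
      rwa [hfw (u, y) ⟨hu, hy⟩] at this
    have hexp : HasDerivAt (fun u : ℝ => Real.exp (-wi * u)) (Real.exp (-wi * u) * -wi) u := by
      simpa using (((hasDerivAt_id u).const_mul (-wi)).exp)
    have := hexp.mul hfd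
    exact this.congr_deriv (by ring)
  have hconst : ∀ u ∈ Ioi (0:ℝ), φ u = φ 1 := by
    intro u hu
    set a := min u 1 with ha
    set b := max u 1 with hb
    have hab : Icc a b ⊆ Ioi (0:ℝ) := fun x hx =>
      lt_of_lt_of_le (lt_min hu one_pos) hx.1
    have key : ∀ x ∈ Icc a b, φ x = φ a :=
      constant_of_has_deriv_right_zero
        (fun x hx => ((hder x (hab hx)).continuousAt).continuousWithinAt)
        (fun x hx => ((hder x (hab ⟨hx.1, hx.2.le⟩)).hasDerivWithinAt))
    have h1 : φ u = φ a := key u ⟨min_le_left _ _, le_max_left _ _⟩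
    have h2 : φ 1 = φ a := key 1 ⟨min_le_right _ _, le_max_right _ _⟩
    rw [h1, h2]
  have h := hconst t ht
  simp only [hφ] at h
  calc fi (t, y) = (Real.exp (wi * t) * Real.exp (-wi * t)) * fi (t, y) := by
        rw [← Real.exp_add, show wi * t + -wi * t = 0 by ring, Real.exp_zero, one_mul]
    _ = Real.exp (wi * t) * (Real.exp (-wi * t) * fi (t, y)) := by ring
    _ = Real.exp (wi * t) * (Real.exp (-wi * 1) * fi (1, y)) := by rw [h]
    _ = Real.exp (wi * t) * (Real.exp (-wi) * fi (1, y)) := by norm_num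

/-- Let `V ⊆ ℝ^d` be open, `K ⊆ V` compact, `w₁, …, w_s ∈ ℝ`, and let
`f_i, g_i : ℝ × V → ℝ` be smooth functions satisfying `∂f_i/∂x₁ = w_i f_i`,
`∂g_i/∂x₁ = w_i g_i` and `g_i > 0` on `(0,∞) × V`.  Then `F = (Σ f_i)/(Σ g_i)` and all of
its iterated derivatives (of any order, in any of the variables) are bounded on
`(0,∞) × K`.  (The case `m = 0` of the conclusion is the boundedness of `F` itself.) -/
theorem stmt_4 (d s : ℕ) (V : Set (Fin d → ℝ)) (hV : IsOpen V)
    (K : Set (Fin d → ℝ)) (hK : IsCompact K) (hKV : K ⊆ V)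
    (w : Fin s → ℝ) (f g : Fin s → (ℝ × (Fin d → ℝ)) → ℝ)
    (hf : ∀ i, ContDiffOn ℝ (⊤ : ℕ∞) (f i) ((univ : Set ℝ) ×ˢ V))
    (hg : ∀ i, ContDiffOn ℝ (⊤ : ℕ∞) (g i) ((univ : Set ℝ) ×ˢ V))
    (hfw : ∀ i, ∀ p ∈ (Ioi (0:ℝ)) ×ˢ V, fderiv ℝ (f i) p (1, 0) = w i * f i p)
    (hgw : ∀ i, ∀ p ∈ (Ioi (0:ℝ)) ×ˢ V, fderiv ℝ (g i) p (1, 0) = w i * g i p)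
    (hgpos : ∀ i, ∀ p ∈ (Ioi (0:ℝ)) ×ˢ V, 0 < g i p) :
    (∃ C : ℝ, ∀ p ∈ (Ioi (0:ℝ)) ×ˢ K,
        |(∑ i, f i p) / (∑ i, g i p)| ≤ C) ∧
    (∀ m : ℕ, ∃ C : ℝ, ∀ p ∈ (Ioi (0:ℝ)) ×ˢ K,
        ‖iteratedFDeriv ℝ m (fun q => (∑ i, f i q) / (∑ i, g i q)) p‖ ≤ C) := by
  classical
  suffices H : ∀ m : ℕ, ∃ C : ℝ, ∀ p ∈ (Ioi (0:ℝ)) ×ˢ K,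
      ‖iteratedFDeriv ℝ m (fun q => (∑ i, f i q) / (∑ i, g i q)) p‖ ≤ C by
    refine ⟨?_, H⟩
    obtain ⟨C, hC⟩ := H 0
    refine ⟨C, fun p hp => ?_⟩
    have := hC p hp
    rwa [norm_iteratedFDeriv_zero, Real.norm_eq_abs] at this
  rcases Nat.eq_zero_or_pos s with rfl | hs0
  · intro m
    refine ⟨0, fun p hp => ?_⟩
    have hzero : (fun q : ℝ × (Fin d → ℝ) => (∑ i, f i q) / (∑ i, g i q))
        = fun _ => (0:ℝ) := by funext q; simp
    rw [hzero, iteratedFDeriv_zero_fun]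
    simp
  haveI : Nonempty (Fin s) := ⟨⟨0, hs0⟩⟩
  obtain ⟨i₀, hi₀⟩ := Finite.exists_max w
  set c : Fin s → ℝ := fun i => w i - w i₀ with hcdef
  have hc : ∀ j, c j ≤ 0 := fun j => sub_nonpos.2 (hi₀ j)
  set a : Fin s → (Fin d → ℝ) → ℝ := fun i y => Real.exp (-w i) * f i (1, y) with hadef
  set b : Fin s → (Fin d → ℝ) → ℝ := fun i y => Real.exp (-w i) * g i (1, y) with hbdef
  have hfa : ∀ i {t : ℝ}, 0 < t → ∀ {y}, y ∈ V → f i (t, y) = Real.exp (w i * t) * a i y :=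
    fun i t ht y hy => weight_eq hV (hf i) (hfw i) ht hy
  have hgb : ∀ i {t : ℝ}, 0 < t → ∀ {y}, y ∈ V → g i (t, y) = Real.exp (w i * t) * b i y :=
    fun i t ht y hy => weight_eq hV (hg i) (hgw i) ht hy
  have hbpos : ∀ i, ∀ y ∈ V, 0 < b i y := fun i y hy =>
    mul_pos (Real.exp_pos _) (hgpos i (1, y) ⟨mem_Ioi.2 one_pos, hy⟩)
  have h1y : ContDiff ℝ ∞ (fun y : Fin d → ℝ => ((1:ℝ), y)) := contDiff_const.prodMk contDiff_id
  have hasm : ∀ i, ContDiffOn ℝ ∞ (a i) V := fun i =>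
    contDiffOn_const.mul (((hf i).of_le (by simp)).comp h1y.contDiffOn (fun y hy => ⟨trivial, hy⟩))
  have hbsm : ∀ i, ContDiffOn ℝ ∞ (b i) V := fun i =>
    contDiffOn_const.mul (((hg i).of_le (by simp)).comp h1y.contDiffOn (fun y hy => ⟨trivial, hy⟩))
  -- the compactified quotient function
  set num : (Fin s → ℝ) × (Fin d → ℝ) → ℝ := fun q => ∑ i, q.1 i * a i q.2 with hnumdef
  set den : (Fin s → ℝ) × (Fin d → ℝ) → ℝ := fun q => ∑ i, q.1 i * b i q.2 with hdendef
  set Φ : (Fin s → ℝ) × (Fin d → ℝ) → ℝ := fun q => num q / den q with hΦdef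
  set W : Set ((Fin s → ℝ) × (Fin d → ℝ)) := Prod.snd ⁻¹' V with hWdef
  have hWopen : IsOpen W := hV.preimage continuous_snd
  have hq1 : ∀ i, ContDiff ℝ ∞ (fun q : (Fin s → ℝ) × (Fin d → ℝ) => q.1 i) :=
    fun i => (contDiff_pi.1 contDiff_fst) i
  have hnumsm : ContDiffOn ℝ ∞ num W := ContDiffOn.sum fun i _ =>
    ((hq1 i).contDiffOn).mul ((hasm i).comp contDiff_snd.contDiffOn (fun q hq => hq))
  have hdensm : ContDiffOn ℝ ∞ den W := ContDiffOn.sum fun i _ =>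
    ((hq1 i).contDiffOn).mul ((hbsm i).comp contDiff_snd.contDiffOn (fun q hq => hq))
  set U : Set ((Fin s → ℝ) × (Fin d → ℝ)) := W ∩ den ⁻¹' Ioi 0 with hUdef
  have hUopen : IsOpen U := hdensm.continuousOn.isOpen_inter_preimage hWopen isOpen_Ioi
  have hΦsm : ContDiffOn ℝ ∞ Φ U :=
    (hnumsm.mono inter_subset_left).div (hdensm.mono inter_subset_left)
      (fun q hq => ne_of_gt hq.2)
  set Z : Set (Fin s → ℝ) := {z | (∀ j, z j ∈ Icc (0:ℝ) 1) ∧ z i₀ = 1} with hZdef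
  have hZcomp : IsCompact Z := by
    have h1 : Z = (univ.pi fun _ : Fin s => Icc (0:ℝ) 1) ∩ {z | z i₀ = 1} := by
      ext z; simp [hZdef, Set.mem_pi, Pi.le_def, forall_and]
    rw [h1]
    exact (isCompact_univ_pi fun _ => isCompact_Icc).inter_right
      (isClosed_eq (continuous_apply i₀) continuous_const)
  set L : Set ((Fin s → ℝ) × (Fin d → ℝ)) := Z ×ˢ K with hLdef
  have hLcomp : IsCompact L := hZcomp.prod hK
  have hLU : L ⊆ U := by
    rintro ⟨z, y⟩ ⟨hz, hy⟩
    refine ⟨hKV hy, ?_⟩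
    have : 0 < den (z, y) := by
      refine Finset.sum_pos' (fun i _ => mul_nonneg (hz.1 i).1 (hbpos i y (hKV hy)).le)
        ⟨i₀, Finset.mem_univ i₀, ?_⟩
      rw [hz.2, one_mul]
      exact hbpos i₀ y (hKV hy)
    exact this
  obtain ⟨M, hMcomp, hLM, hMU⟩ := exists_compact_between hLcomp hUopen hLU
  set U' : Set ((Fin s → ℝ) × (Fin d → ℝ)) := interior M with hU'def
  have hU'op : IsOpen U' := isOpen_interior
  have hU'U : U' ⊆ U := interior_subset.trans hMU
  have hLU' : L ⊆ U' := hLM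
  set χ : ℝ × (Fin d → ℝ) → (Fin s → ℝ) × (Fin d → ℝ) :=
    fun q => ((fun j => Real.exp (c j * q.1)), q.2) with hχdef
  have hχsm : ContDiff ℝ ∞ χ :=
    ContDiff.prodMk (contDiff_pi.2 fun j => (exp_contDiff (c j)).comp contDiff_fst) contDiff_snd
  set s' : Set (ℝ × (Fin d → ℝ)) := (Ioi (0:ℝ) ×ˢ V) ∩ χ ⁻¹' U' with hs'def
  have hs'op : IsOpen s' := ((isOpen_Ioi).prod hV).inter (hU'op.preimage hχsm.continuous)
  have hχL : ∀ p ∈ (Ioi (0:ℝ)) ×ˢ K, χ p ∈ L := by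
    rintro ⟨t, y⟩ ⟨ht, hy⟩
    have ht' : (0:ℝ) < t := ht
    refine ⟨⟨fun j => ⟨(Real.exp_pos _).le, ?_⟩, ?_⟩, hy⟩
    · rw [Real.exp_le_one_iff]
      nlinarith [hc j]
    · show Real.exp (c i₀ * t) = 1
      have : c i₀ = 0 := sub_self _
      rw [this, zero_mul, Real.exp_zero]
  have hKs' : (Ioi (0:ℝ)) ×ˢ K ⊆ s' := fun p hp => ⟨⟨hp.1, hKV hp.2⟩, hLU' (hχL p hp)⟩
  have hFeq : EqOn (fun q => (∑ i, f i q) / (∑ i, g i q)) (Φ ∘ χ) ((Ioi (0:ℝ)) ×ˢ V) := by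
    rintro ⟨t, y⟩ ⟨ht, hy⟩
    have ht' : (0:ℝ) < t := ht
    have hnum' : ∑ i, f i (t, y) = Real.exp (w i₀ * t) * ∑ i, Real.exp (c i * t) * a i y := by
      rw [Finset.mul_sum]
      refine Finset.sum_congr rfl fun i _ => ?_
      have hsplit : Real.exp (w i * t) = Real.exp (w i₀ * t) * Real.exp (c i * t) := by
        rw [← Real.exp_add]
        congr 1
        simp only [hcdef]
        ring
      rw [hfa i ht' hy, hsplit, mul_assoc]
    have hden' : ∑ i, g i (t, y) = Real.exp (w i₀ * t) * ∑ i, Real.exp (c i * t) * b i y := by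
      rw [Finset.mul_sum]
      refine Finset.sum_congr rfl fun i _ => ?_
      have hsplit : Real.exp (w i * t) = Real.exp (w i₀ * t) * Real.exp (c i * t) := by
        rw [← Real.exp_add]
        congr 1
        simp only [hcdef]
        ring
      rw [hgb i ht' hy, hsplit, mul_assoc]
    show (∑ i, f i (t, y)) / (∑ i, g i (t, y)) = Φ (χ (t, y))
    rw [hnum', hden']
    have hΦval : Φ (χ (t, y))
        = (∑ i, Real.exp (c i * t) * a i y) / (∑ i, Real.exp (c i * t) * b i y) := rfl
    rw [hΦval]
    exact mul_div_mul_left _ _ (Real.exp_ne_zero _)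
  intro m
  -- bound on the derivatives of Φ on L
  have hCex : ∀ i : ℕ, ∃ Ci : ℝ, ∀ q ∈ L, ‖iteratedFDerivWithin ℝ i Φ U' q‖ ≤ Ci := by
    intro i
    have hcont : ContinuousOn (iteratedFDerivWithin ℝ i Φ U') U' :=
      (hΦsm.mono hU'U).continuousOn_iteratedFDerivWithin (natle i) hU'op.uniqueDiffOn
    exact hLcomp.exists_bound_of_continuousOn (hcont.mono hLU')
  choose Cf hCf using hCex
  set C : ℝ := ∑ i ∈ Finset.range (m+1), |Cf i| with hCdef
  have hCle : ∀ i, i ≤ m → ∀ q ∈ L, ‖iteratedFDerivWithin ℝ i Φ U' q‖ ≤ C := by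
    intro i him q hq
    refine (hCf i q hq).trans ((le_abs_self _).trans ?_)
    exact Finset.single_le_sum (f := fun i => |Cf i|) (fun _ _ => abs_nonneg _)
      (Finset.mem_range.2 (Nat.lt_succ_of_le him))
  -- bound on the derivatives of χ
  set A : ℝ := 1 + ∑ j, |c j| with hAdef
  have hA1 : (1:ℝ) ≤ A := le_add_of_nonneg_right (Finset.sum_nonneg fun _ _ => abs_nonneg _)
  have hcA : ∀ j, |c j| ≤ A := fun j =>
    (Finset.single_le_sum (f := fun j => |c j|) (fun _ _ => abs_nonneg _)
      (Finset.mem_univ j)).trans (le_add_of_nonneg_left zero_le_one)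
  set D : ℝ := (1 + s) * A ^ m with hDdef
  have hAm1 : (1:ℝ) ≤ A ^ m := one_le_pow₀ hA1
  have hD1 : (1:ℝ) ≤ D := by
    have hs1 : (1:ℝ) ≤ 1 + s := le_add_of_nonneg_right (Nat.cast_nonneg s)
    nlinarith
  refine ⟨(Nat.factorial m : ℝ) * C * D ^ m, fun p hp => ?_⟩
  have hps' : p ∈ s' := hKs' hp
  have hp1 : 0 < p.1 := hp.1
  have heq1 : iteratedFDeriv ℝ m (fun q => (∑ i, f i q) / (∑ i, g i q)) p
      = iteratedFDerivWithin ℝ m (Φ ∘ χ) s' p := by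
    rw [← iteratedFDerivWithin_of_isOpen m hs'op hps']
    exact iteratedFDerivWithin_congr (hFeq.mono inter_subset_left) hps' m
  rw [heq1]
  refine norm_iteratedFDerivWithin_comp_le (hΦsm.mono hU'U) hχsm.contDiffOn (natle m)
    hU'op.uniqueDiffOn hs'op.uniqueDiffOn (fun q hq => hq.2) hps'
    (fun i hi => hCle i hi (χ p) (hχL p hp)) (fun i hi1 him => ?_)
  rw [iteratedFDerivWithin_of_isOpen i hs'op hps']
  have hb1 : ‖iteratedFDeriv ℝ i χ p‖ ≤ 1 + ∑ j, |c j| ^ i := by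
    have := chi_bound c hc hi1 p hp1
    rwa [← hχdef] at this
  refine hb1.trans ?_
  have hsum : ∑ j, |c j| ^ i ≤ (s : ℝ) * A ^ m := by
    calc ∑ j, |c j| ^ i ≤ ∑ _j : Fin s, A ^ m := by
          refine Finset.sum_le_sum fun j _ => ?_
          calc |c j| ^ i ≤ A ^ i := pow_le_pow_left₀ (abs_nonneg _) (hcA j) i
            _ ≤ A ^ m := pow_le_pow_right₀ hA1 him
      _ = (s : ℝ) * A ^ m := by
          rw [Finset.sum_const, Finset.card_univ, Fintype.card_fin, nsmul_eq_mul]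
  have hDD : 1 + ∑ j, |c j| ^ i ≤ D := by
    rw [hDdef]
    nlinarith
  exact hDD.trans (le_self_pow₀ hD1 (Nat.one_le_iff_ne_zero.1 hi1))
end

section
/- Let P ∈ ℝ[x, y] be a polynomial of total degree s and let Q denote its homogeneous component of degree s. If there exists L ∈ ℕ such that P(m, k) ≥ 0 for all integers m, k ≥ L, then Q(x, y) ≥ 0 for all real x, y ≥ 0. -/
/-!
Writing `Q_d` for the degree-`d` component of `P` and `totalDegree P ≤ s`, homogeneity gives
`P(w) / c ^ s = ∑_{d ≤ s} c^(d - s) Q_d(w / c)`, which tends to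
`Q_s(x)` whenever `c → ∞` and `w / c → x`. For `x ≥ 0` the lattice points
`w_t = L + ⌈t x⌉₊` (coordinatewise) satisfy `w_t / t → x`, and `P(w_t) ≥ 0` there.
-/

open Filter Topology Finset

namespace MvPolynomial

variable {σ : Type*}

theorem IsHomogeneous.eval_smul {R : Type*} [CommSemiring R] {φ : MvPolynomial σ R} {n : ℕ}
    (hφ : φ.IsHomogeneous n) (c : R) (x : σ → R) :
    eval (c • x) φ = c ^ n * eval x φ := by
  rw [eval_eq, eval_eq, mul_sum]
  refine sum_congr rfl fun d hd => ?_
  have hdeg : d.degree = n := by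
    rw [Finsupp.degree_eq_weight_one]
    exact hφ (mem_support_iff.mp hd)
  simp only [Pi.smul_apply, smul_eq_mul, mul_pow, prod_mul_distrib, prod_pow_eq_pow_sum,
    ← Finsupp.degree_apply, hdeg]
  ring

theorem eval_smul_eq_sum_homogeneousComponent {R : Type*} [CommSemiring R]
    {P : MvPolynomial σ R} {s : ℕ} (hP : P.totalDegree ≤ s) (c : R) (x : σ → R) :
    eval (c • x) P = ∑ d ∈ range (s + 1), c ^ d * eval x (homogeneousComponent d P) := by
  conv_lhs => rw [← sum_homogeneousComponent P]
  rw [map_sum]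
  refine sum_subset (range_subset_range.mpr (by omega)) (fun d _ hd => ?_) |>.trans
    (sum_congr rfl fun d _ => (homogeneousComponent_isHomogeneous d P).eval_smul c x)
  rw [homogeneousComponent_eq_zero _ _ (by rw [mem_range] at hd; omega), map_zero]

variable {𝕜 : Type*} [Field 𝕜] [LinearOrder 𝕜] [IsStrictOrderedRing 𝕜] [TopologicalSpace 𝕜]
  [OrderTopology 𝕜]

theorem tendsto_eval_div_pow_homogeneousComponent {ι : Type*} {l : Filter ι}
    {P : MvPolynomial σ 𝕜} {s : ℕ} (hP : P.totalDegree ≤ s) {c : ι → 𝕜} (hc : Tendsto c l atTop)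
    {w : ι → σ → 𝕜} {x : σ → 𝕜} (hw : Tendsto (fun i => (c i)⁻¹ • w i) l (𝓝 x)) :
    Tendsto (fun i => eval (w i) P / c i ^ s) l (𝓝 (eval x (homogeneousComponent s P))) := by
  have hscaled : ∀ᶠ i in l, eval (w i) P / c i ^ s =
      ∑ d ∈ range (s + 1), (c i)⁻¹ ^ (s - d) * eval ((c i)⁻¹ • w i) (homogeneousComponent d P) := by
    filter_upwards [hc.eventually_gt_atTop 0] with i hi
    rw [← smul_inv_smul₀ hi.ne' (w i), eval_smul_eq_sum_homogeneousComponent hP, sum_div,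
      inv_smul_smul₀ hi.ne']
    refine sum_congr rfl fun d hd => ?_
    rw [inv_pow, pow_sub₀ _ hi.ne' (Nat.lt_succ_iff.mp (mem_range.mp hd))]
    field_simp
  have hlim : Tendsto (fun i => ∑ d ∈ range (s + 1),
      (c i)⁻¹ ^ (s - d) * eval ((c i)⁻¹ • w i) (homogeneousComponent d P)) l
      (𝓝 (∑ d ∈ range (s + 1), 0 ^ (s - d) * eval x (homogeneousComponent d P))) :=
    tendsto_finsetSum _ fun d _ =>
      ((tendsto_inv_atTop_zero.comp hc).pow _).mul ((continuous_eval _).tendsto x |>.comp hw)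
  rw [sum_range_succ, sum_eq_zero fun d hd => by
    rw [zero_pow (Nat.sub_ne_zero_of_lt (mem_range.mp hd)), zero_mul]] at hlim
  simpa using hlim.congr' (hscaled.mono fun _ h => h.symm)

theorem tendsto_inv_smul_add_natCeil_mul (L : ℕ) {x : σ → ℝ} (hx : 0 ≤ x) :
    Tendsto (fun t : ℝ => t⁻¹ • fun i => ((L + ⌈x i * t⌉₊ : ℕ) : ℝ)) atTop (𝓝 x) := by
  refine tendsto_pi_nhds.mpr fun i => ?_
  have hsum := (tendsto_const_nhds (x := (L : ℝ)).div_atTop tendsto_id).add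
    (tendsto_nat_ceil_mul_div_atTop (hx i))
  rw [zero_add] at hsum
  refine hsum.congr fun t => ?_
  simp [div_eq_inv_mul, mul_add]

theorem eval_homogeneousComponent_nonneg_of_eval_natCast_nonneg {P : MvPolynomial σ ℝ} {s : ℕ}
    (hP : P.totalDegree ≤ s) {L : ℕ}
    (hpos : ∀ m : σ → ℕ, (∀ i, L ≤ m i) → 0 ≤ eval (fun i => (m i : ℝ)) P)
    {x : σ → ℝ} (hx : 0 ≤ x) : 0 ≤ eval x (homogeneousComponent s P) := by
  refine ge_of_tendsto (tendsto_eval_div_pow_homogeneousComponent hP tendsto_id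
    (tendsto_inv_smul_add_natCeil_mul L hx)) ?_
  filter_upwards [eventually_ge_atTop 0] with t ht
  exact div_nonneg (hpos _ fun i => Nat.le_add_right _ _) (pow_nonneg ht s)

end MvPolynomial

/-- Let `P ∈ ℝ[x, y]` be a polynomial of total degree `s` with
homogeneous component `Q` of degree `s`.  If there is an `L ∈ ℕ` with `P(m, k) ≥ 0` for all
integers `m, k ≥ L`, then `Q(x, y) ≥ 0` for all reals `x, y ≥ 0`. -/
theorem stmt_7 (P : MvPolynomial (Fin 2) ℝ) (s : ℕ) (hdeg : P.totalDegree = s)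
    (L : ℕ)
    (hpos : ∀ m k : ℕ, L ≤ m → L ≤ k →
      0 ≤ MvPolynomial.eval ![(m : ℝ), (k : ℝ)] P) :
    ∀ x y : ℝ, 0 ≤ x → 0 ≤ y →
      0 ≤ MvPolynomial.eval ![x, y] (MvPolynomial.homogeneousComponent s P) := by
  intro x y hx hy
  refine MvPolynomial.eval_homogeneousComponent_nonneg_of_eval_natCast_nonneg (L := L) hdeg.le
    (fun m hm => ?_) (fun i => by fin_cases i <;> simpa)
  convert hpos (m 0) (m 1) (hm 0) (hm 1) using 3
  ext i; fin_cases i <;> rfl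
end

section
/- Let P ∈ ℝ[x, y] be a nonzero polynomial of total degree s, and suppose there exists L ∈ ℕ such that P(m, k) ≥ 0 for all integers m, k ≥ L. Then there exist ε > 0 and T₀ > 0 such that for every T ≥ T₀, Σ P(m, k) ≥ ε T^{s+2}, where the sum ranges over all pairs (m, k) of natural numbers with m ≥ L, k ≥ L and m + k ≤ T. -/
/-!
Pick a monomial `x^a y^b` of top degree `s = a + b`, with coefficient `c ≠ 0`. With step `N`, the
mixed forward difference `Δ_y^b Δ_x^a P` is the constant `a! b! c N^s`, and it is a combination
of the values of `P` on the grid `(m + iN, k + jN)`, `i ≤ a`, `j ≤ b`, with binomial weights of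
size at most `2^s`. As these values are nonnegative, every such grid carries mass at least
`a! b! |c| N^s / 2^s`. The `N²` grids based at `(L + r, L + r')`, `r, r' < N`, tile the rectangle
`[L, L + (a+1)N) × [L, L + (b+1)N)`, which lies in the triangle `m + k ≤ T` for
`N = ⌊T / (2(s+2))⌋`; this gives a lower bound `≳ N^(s+2) ≳ T^(s+2)`.
-/

open scoped Classical

open Finset fwdDiff

section PowDiff

variable {R : Type*} [CommRing R] (h : R)

lemma fwdDiff_pow_eq_sum (p : ℕ) :
    Δ_[h] (fun x : R => x ^ p) =
      ∑ t ∈ range p, ((p.choose t : R) * h ^ (p - t)) • fun x => x ^ t := by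
  ext x
  simp only [fwdDiff, Finset.sum_apply, Pi.smul_apply, smul_eq_mul, add_pow, sum_range_succ,
    Nat.choose_self, Nat.sub_self, pow_zero, Nat.cast_one, mul_one, add_sub_cancel_right]
  exact sum_congr rfl fun t _ => by ring

lemma fwdDiff_iter_pow_eq_zero_of_lt' {p n : ℕ} (hpn : p < n) :
    (Δ_[h])^[n] (fun x : R => x ^ p) = 0 := by
  induction n generalizing p with
  | zero => omega
  | succ n ih =>
    rw [Function.iterate_succ_apply, fwdDiff_pow_eq_sum, fwdDiff_iter_finsetSum]
    exact sum_eq_zero fun t ht => by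
      rw [fwdDiff_iter_const_smul, ih (by have := mem_range.1 ht; omega), smul_zero]

lemma fwdDiff_iter_eq_factorial_mul_pow (n : ℕ) :
    (Δ_[h])^[n] (fun x : R => x ^ n) = fun _ => (n.factorial : R) * h ^ n := by
  induction n with
  | zero => ext; simp
  | succ n ih =>
    rw [Function.iterate_succ_apply, fwdDiff_pow_eq_sum, fwdDiff_iter_finsetSum, sum_range_succ,
      sum_eq_zero fun t ht => by
        rw [fwdDiff_iter_const_smul, fwdDiff_iter_pow_eq_zero_of_lt' h (mem_range.1 ht),
          smul_zero], fwdDiff_iter_const_smul, ih]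
    ext
    simp only [Nat.choose_succ_self_right, Nat.cast_add, Nat.cast_one, add_tsub_cancel_left,
      pow_one, Pi.add_apply, Pi.zero_apply, Pi.smul_apply, smul_eq_mul, zero_add,
      Nat.factorial_succ, Nat.cast_mul]
    ring

end PowDiff

lemma norm_fwdDiff_iter_le {M G : Type*} [AddCommMonoid M] [SeminormedAddCommGroup G] (h : M)
    (f : M → G) (n : ℕ) (y : M) :
    ‖(Δ_[h])^[n] f y‖ ≤ 2 ^ n * ∑ k ∈ range (n + 1), ‖f (y + k • h)‖ := by
  rw [fwdDiff_iter_eq_sum_shift, mul_sum]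
  refine (norm_sum_le _ _).trans (sum_le_sum fun k hk => (norm_zsmul_le _ _).trans ?_)
  gcongr
  have hchoose : n.choose k ≤ 2 ^ n :=
    (single_le_sum (fun _ _ => Nat.zero_le _) hk).trans (Nat.sum_range_choose n).le
  simpa using (Nat.cast_le (α := ℝ)).mpr hchoose

lemma Finset.sum_range_mul_eq_sum_sum {M : Type*} [AddCommMonoid M] (g : ℕ → M) (a N : ℕ) :
    ∑ n ∈ range (a * N), g n = ∑ i ∈ range a, ∑ r ∈ range N, g (i * N + r) := by
  induction a with
  | zero => simp
  | succ a ih => rw [Nat.succ_mul, sum_range_add, ih, sum_range_succ]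

lemma Finset.sum_range_mul_sum_range_mul_eq {M : Type*} [AddCommMonoid M] (g : ℕ → ℕ → M)
    (a b N : ℕ) :
    ∑ n ∈ range (a * N), ∑ n' ∈ range (b * N), g n n' =
      ∑ r ∈ range N, ∑ r' ∈ range N, ∑ i ∈ range a, ∑ j ∈ range b,
        g (i * N + r) (j * N + r') := by
  simp only [sum_range_mul_eq_sum_sum]
  rw [sum_comm]
  refine sum_congr rfl fun r _ => ?_
  conv_rhs => rw [sum_comm]
  exact sum_congr rfl fun i _ => sum_comm

lemma Finsupp.sum_fin_two_eq_add (d : Fin 2 →₀ ℕ) : (d.sum fun _ e => e) = d 0 + d 1 := by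
  rw [Finsupp.sum_fintype _ _ fun _ => rfl, Fin.sum_univ_two]

namespace MvPolynomial

variable {R : Type*} [CommRing R]

lemma exists_coeff_ne_zero_add_eq_totalDegree {P : MvPolynomial (Fin 2) R} (hP : P ≠ 0) :
    ∃ d, P.coeff d ≠ 0 ∧ d 0 + d 1 = P.totalDegree := by
  obtain ⟨d, hd, hsup⟩ := exists_mem_eq_sup P.support (support_nonempty.mpr hP)
    fun d : Fin 2 →₀ ℕ => d.sum fun _ e => e
  exact ⟨d, mem_support_iff.mp hd, by rw [← Finsupp.sum_fin_two_eq_add, totalDegree, hsup]⟩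

lemma add_le_totalDegree {P : MvPolynomial (Fin 2) R} {d : Fin 2 →₀ ℕ} (hd : d ∈ P.support) :
    d 0 + d 1 ≤ P.totalDegree :=
  Finsupp.sum_fin_two_eq_add d ▸ le_totalDegree hd

lemma eval_fin_two_eq_sum (P : MvPolynomial (Fin 2) R) (x y : R) :
    eval ![x, y] P = ∑ d ∈ P.support, P.coeff d * x ^ d 0 * y ^ d 1 := by
  rw [eval_eq']
  simp only [Fin.prod_univ_two, Matrix.cons_val_zero, Matrix.cons_val_one, mul_assoc]

lemma fwdDiff_iter_fwdDiff_iter_eval (P : MvPolynomial (Fin 2) R) (d : Fin 2 →₀ ℕ)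
    (hP : P.totalDegree ≤ d 0 + d 1) (h u v : R) :
    (Δ_[h])^[d 1] (fun y => (Δ_[h])^[d 0] (fun x => eval ![x, y] P) u) v
      = (d 0).factorial * (d 1).factorial * P.coeff d * h ^ (d 0 + d 1) := by
  have inner : (fun y => (Δ_[h])^[d 0] (fun x => eval ![x, y] P) u) =
      ∑ e ∈ P.support, (P.coeff e * (Δ_[h])^[d 0] (fun x => x ^ e 0) u) • fun y => y ^ e 1 := by
    ext y
    have : (fun x => eval ![x, y] P) =
        ∑ e ∈ P.support, (P.coeff e * y ^ e 1) • fun x => x ^ e 0 := by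
      ext x
      simp only [eval_fin_two_eq_sum, Finset.sum_apply, Pi.smul_apply, smul_eq_mul]
      exact sum_congr rfl fun e _ => by ring
    simp only [this, fwdDiff_iter_finsetSum, fwdDiff_iter_const_smul, Finset.sum_apply,
      Pi.smul_apply, smul_eq_mul]
    exact sum_congr rfl fun e _ => by ring
  rw [inner, fwdDiff_iter_finsetSum, Finset.sum_apply, sum_eq_single d]
  · rw [fwdDiff_iter_const_smul, fwdDiff_iter_eq_factorial_mul_pow,
      fwdDiff_iter_eq_factorial_mul_pow]
    simp only [Pi.smul_apply, smul_eq_mul]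
    ring
  · intro e he hne
    have hdeg := (add_le_totalDegree he).trans hP
    rw [fwdDiff_iter_const_smul]
    rcases lt_or_ge (e 0) (d 0) with h0 | h0
    · simp [fwdDiff_iter_pow_eq_zero_of_lt' h h0]
    · have h1 : e 1 < d 1 := by
        refine lt_of_le_of_ne (by omega) fun h1 =>
          hne (Finsupp.ext (Fin.forall_fin_two.mpr ⟨by omega, h1⟩))
      simp [fwdDiff_iter_pow_eq_zero_of_lt' h h1]
  · intro hd
    rw [notMem_support_iff.mp hd, zero_mul, zero_smul,
      Function.iterate_fixed (f := Δ_[h]) (by ext; simp [fwdDiff])]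
    rfl

lemma factorial_mul_abs_coeff_mul_pow_le (P : MvPolynomial (Fin 2) ℝ)
    (d : Fin 2 →₀ ℕ) (hP : P.totalDegree ≤ d 0 + d 1) (h u v : ℝ) :
    (d 0).factorial * (d 1).factorial * |P.coeff d| * |h| ^ (d 0 + d 1) ≤
      2 ^ (d 0 + d 1) * ∑ i ∈ range (d 0 + 1), ∑ j ∈ range (d 1 + 1),
        |eval ![u + i * h, v + j * h] P| := by
  calc (d 0).factorial * (d 1).factorial * |P.coeff d| * |h| ^ (d 0 + d 1)
      = ‖(Δ_[h])^[d 1] (fun y => (Δ_[h])^[d 0] (fun x => eval ![x, y] P) u) v‖ := by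
        rw [fwdDiff_iter_fwdDiff_iter_eval P d hP, Real.norm_eq_abs, abs_mul, abs_mul, abs_mul,
          abs_pow, Nat.abs_cast, Nat.abs_cast]
    _ ≤ 2 ^ d 1 * ∑ j ∈ range (d 1 + 1),
          ‖(Δ_[h])^[d 0] (fun x => eval ![x, v + j • h] P) u‖ :=
        norm_fwdDiff_iter_le _ _ _ _
    _ ≤ 2 ^ d 1 * ∑ j ∈ range (d 1 + 1), 2 ^ d 0 * ∑ i ∈ range (d 0 + 1),
          ‖eval ![u + i • h, v + j • h] P‖ := by
        gcongr
        exact norm_fwdDiff_iter_le _ _ _ _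
    _ = _ := by
        rw [sum_comm (s := range (d 0 + 1))]
        simp only [mul_sum, nsmul_eq_mul, Real.norm_eq_abs, pow_add]
        exact sum_congr rfl fun j _ => sum_congr rfl fun i _ => by ring

lemma factorial_mul_abs_coeff_div_mul_pow_le_sum (P : MvPolynomial (Fin 2) ℝ)
    (d : Fin 2 →₀ ℕ) (hP : P.totalDegree ≤ d 0 + d 1) (L : ℕ)
    (hpos : ∀ m k : ℕ, L ≤ m → L ≤ k → 0 ≤ eval ![(m : ℝ), (k : ℝ)] P) (N : ℕ) :
    (d 0).factorial * (d 1).factorial * |P.coeff d| / 2 ^ (d 0 + d 1) * N ^ (d 0 + d 1 + 2) ≤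
      ∑ n ∈ range ((d 0 + 1) * N), ∑ n' ∈ range ((d 1 + 1) * N),
        eval ![((L + n : ℕ) : ℝ), ((L + n' : ℕ) : ℝ)] P := by
  have hgrid : ∀ r i : ℕ, ((L + r : ℕ) : ℝ) + i * N = ((L + (i * N + r) : ℕ) : ℝ) := by
    intro r i; push_cast; ring
  rw [div_mul_eq_mul_div, div_le_iff₀ (by positivity), sum_range_mul_sum_range_mul_eq]
  calc (d 0).factorial * (d 1).factorial * |P.coeff d| * (N : ℝ) ^ (d 0 + d 1 + 2)
      = ∑ r ∈ range N, ∑ r' ∈ range N,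
          (d 0).factorial * (d 1).factorial * |P.coeff d| * |(N : ℝ)| ^ (d 0 + d 1) := by
        simp only [sum_const, card_range, nsmul_eq_mul, Nat.abs_cast]
        ring
    _ ≤ ∑ r ∈ range N, ∑ r' ∈ range N, 2 ^ (d 0 + d 1) *
          ∑ i ∈ range (d 0 + 1), ∑ j ∈ range (d 1 + 1),
            |eval ![((L + (i * N + r) : ℕ) : ℝ), ((L + (j * N + r') : ℕ) : ℝ)] P| := by
        refine sum_le_sum fun r _ => sum_le_sum fun r' _ => ?_
        simpa only [hgrid] using
          factorial_mul_abs_coeff_mul_pow_le P d hP N ((L + r : ℕ) : ℝ) ((L + r' : ℕ) : ℝ)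
    _ = _ := by
        simp only [mul_sum, sum_mul]
        refine sum_congr rfl fun r _ => sum_congr rfl fun r' _ =>
          sum_congr rfl fun i _ => sum_congr rfl fun j _ => ?_
        rw [abs_of_nonneg (hpos _ _ (Nat.le_add_right _ _) (Nat.le_add_right _ _)), mul_comm]

end MvPolynomial

lemma sum_rectangle_le_sum_triangle (f : ℕ × ℕ → ℝ) (L U V : ℕ) (T : ℝ)
    (hf : ∀ m k : ℕ, L ≤ m → L ≤ k → 0 ≤ f (m, k)) (hT : (2 * L + U + V : ℝ) ≤ T) :
    ∑ n ∈ range U, ∑ n' ∈ range V, f (L + n, L + n') ≤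
      ∑ p ∈ filter (fun p : ℕ × ℕ => L ≤ p.1 ∧ L ≤ p.2 ∧ ((p.1 : ℝ) + (p.2 : ℝ)) ≤ T)
          (range (⌈T⌉₊ + 1) ×ˢ range (⌈T⌉₊ + 1)), f p := by
  rw [← sum_product', ← sum_image (f := f) (g := fun q : ℕ × ℕ => (L + q.1, L + q.2))
    fun q _ q' _ h => by
      simp only [Prod.mk.injEq, Nat.add_left_cancel_iff] at h
      exact Prod.ext h.1 h.2]
  refine sum_le_sum_of_subset_of_nonneg ?_ fun p hp _ => ?_
  · intro p hp
    obtain ⟨⟨n, n'⟩, hq, rfl⟩ := mem_image.mp hp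
    simp only [mem_product, mem_range] at hq
    have hn : (n : ℝ) + 1 ≤ U := by exact_mod_cast hq.1
    have hn' : (n' : ℝ) + 1 ≤ V := by exact_mod_cast hq.2
    have hsum : ((L + n : ℕ) : ℝ) + ((L + n' : ℕ) : ℝ) ≤ T := by push_cast; linarith
    have hle : ∀ x : ℕ, (x : ℝ) ≤ T → x < ⌈T⌉₊ + 1 := fun x hx =>
      Nat.lt_succ_of_le (Nat.cast_le.mp (hx.trans (Nat.le_ceil T)))
    simp only [mem_filter, mem_product, mem_range]
    refine ⟨⟨hle _ ?_, hle _ ?_⟩, Nat.le_add_right _ _, Nat.le_add_right _ _, hsum⟩ <;>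
      push_cast at hsum ⊢ <;> linarith
  · simp only [mem_filter] at hp
    exact hf _ _ hp.2.1 hp.2.2.1

lemma Nat.half_le_floor {K : Type*} [Field K] [LinearOrder K] [IsStrictOrderedRing K]
    [FloorSemiring K] {x : K} (hx : 1 ≤ x) : x / 2 ≤ ⌊x⌋₊ := by
  have h1 : (1 : K) ≤ ⌊x⌋₊ := by exact_mod_cast Nat.one_le_floor_iff x |>.mpr hx
  have h2 := Nat.sub_one_lt_floor x
  linarith

/-- Let `P ∈ ℝ[x, y]` be a nonzero polynomial of total degree `s` with
`P(m, k) ≥ 0` for all integers `m, k ≥ L`.  Then there are `ε > 0` and `T₀ > 0` such that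
for every `T ≥ T₀` one has `Σ P(m, k) ≥ ε T^{s+2}`, the sum ranging over pairs `(m, k)` of
naturals with `m, k ≥ L` and `m + k ≤ T`. -/
theorem stmt_9 (P : MvPolynomial (Fin 2) ℝ) (hP : P ≠ 0) (s : ℕ)
    (hdeg : P.totalDegree = s) (L : ℕ)
    (hpos : ∀ m k : ℕ, L ≤ m → L ≤ k →
      0 ≤ MvPolynomial.eval ![(m : ℝ), (k : ℝ)] P) :
    ∃ ε : ℝ, 0 < ε ∧ ∃ T₀ : ℝ, 0 < T₀ ∧ ∀ T : ℝ, T₀ ≤ T →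
      ε * T ^ (s + 2) ≤
        ∑ p ∈ Finset.filter
            (fun p : ℕ × ℕ => L ≤ p.1 ∧ L ≤ p.2 ∧ ((p.1 : ℝ) + (p.2 : ℝ)) ≤ T)
            (Finset.range (⌈T⌉₊ + 1) ×ˢ Finset.range (⌈T⌉₊ + 1)),
          MvPolynomial.eval ![(p.1 : ℝ), (p.2 : ℝ)] P := by
  obtain ⟨d, hcoeff, hd⟩ := MvPolynomial.exists_coeff_ne_zero_add_eq_totalDegree hP
  rw [hdeg] at hd
  have hblock := P.factorial_mul_abs_coeff_div_mul_pow_le_sum d (hdeg.trans hd.symm).le L hpos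
  rw [hd] at hblock
  set K : ℝ := (d 0).factorial * (d 1).factorial * |P.coeff d| / 2 ^ s
  have hL : (0 : ℝ) ≤ L := L.cast_nonneg
  refine ⟨K / (4 * (s + 2)) ^ (s + 2), by positivity, 4 * L + 2 * (s + 2), by positivity,
    fun T hT => ?_⟩
  have hT0 : 0 < T := by linarith [Nat.cast_nonneg (α := ℝ) s]
  set N := ⌊T / (2 * (s + 2))⌋₊
  have hN : T / (4 * (s + 2)) ≤ N :=
    (by rw [div_div]; ring : T / (4 * (s + 2)) = T / (2 * (s + 2)) / 2).trans_le
      (Nat.half_le_floor ((one_le_div (by positivity)).mpr (by linarith)))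
  have hNT : (2 * L + ((d 0 + 1) * N : ℕ) + ((d 1 + 1) * N : ℕ) : ℝ) ≤ T := by
    have : N * (2 * (s + 2)) ≤ T :=
      (le_div_iff₀ (by positivity)).mp (Nat.floor_le (by positivity))
    have hs : (s : ℝ) = d 0 + d 1 := by exact_mod_cast hd.symm
    rw [hs] at this hT
    push_cast
    linarith
  calc K / (4 * (s + 2)) ^ (s + 2) * T ^ (s + 2) = K * (T / (4 * (s + 2))) ^ (s + 2) := by
        rw [div_pow]; ring
    _ ≤ K * N ^ (s + 2) := by gcongr
    _ ≤ _ := (hblock N).trans (sum_rectangle_le_sum_triangle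
        (fun p : ℕ × ℕ => MvPolynomial.eval ![(p.1 : ℝ), (p.2 : ℝ)] P) L _ _ T hpos hNT)
end
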